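/- The function f(α) = Σ_{k=1}^K (α_k/2)·log₂((α_k + P_k)/(α_k + h·P_k)), over probability vectors α with positive entries, satisfies f(α) ≤ (1/2)·log₂((1 + Σ_k P_k)/(1 + h·Σ_k P_k)), with equality when α_k = P_k/Σ_j P_j. -/

import Mathlib

/-!
For `0 ≤ h ≤ 1` the map `g t = log ((1 + t) / (1 + h t))` is concave on `(-1, ∞)`: its derivative
`(1 - h) / ((1 + t) (1 + h t))` decreases. Since `α g (P / α) = α log ((α + P) / (α + h P))`, Jensen's
inequality with weights `α_k` at the points `P_k / α_k` bounds the sum by `g (∑ P_k)`. For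
`α_k = P_k / ∑ P_j` all these points coincide with `∑ P_j`, so every term has the same ratio and
equality holds.
-/

open Real Finset

theorem hasDerivAt_log_one_add_sub_log_one_add_mul {h t : ℝ} (ht : 0 < 1 + t)
    (hht : 0 < 1 + h * t) :
    HasDerivAt (fun t => log (1 + t) - log (1 + h * t))
      ((1 - h) / ((1 + t) * (1 + h * t))) t := by
  have hnum := ((hasDerivAt_id' t).const_add 1).log ht.ne'
  have hden := (((hasDerivAt_id' t).const_mul h).const_add 1).log hht.ne'
  refine (hnum.sub hden).congr_deriv ?_
  rw [div_sub_div _ _ ht.ne' hht.ne']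
  ring

theorem one_add_mul_pos_of_one_add_pos {h t : ℝ} (h0 : 0 ≤ h) (h1 : h ≤ 1) (ht : 0 < 1 + t) :
    0 < 1 + h * t := by
  rcases le_total t 0 with ht0 | ht0 <;> nlinarith

theorem concaveOn_log_one_add_sub_log_one_add_mul {h : ℝ} (h0 : 0 ≤ h) (h1 : h ≤ 1) :
    ConcaveOn ℝ (Set.Ioi (-1)) (fun t => log (1 + t) - log (1 + h * t)) := by
  have hpos : ∀ t ∈ Set.Ioi (-1 : ℝ), 0 < 1 + t ∧ 0 < 1 + h * t := fun t (ht : -1 < t) =>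
    ⟨by linarith, one_add_mul_pos_of_one_add_pos h0 h1 (by linarith)⟩
  have hderiv : ∀ t ∈ Set.Ioi (-1 : ℝ), HasDerivAt (fun t => log (1 + t) - log (1 + h * t))
      ((1 - h) / ((1 + t) * (1 + h * t))) t := fun t ht =>
    hasDerivAt_log_one_add_sub_log_one_add_mul (hpos t ht).1 (hpos t ht).2
  have hdiff : DifferentiableOn ℝ (fun t => log (1 + t) - log (1 + h * t)) (Set.Ioi (-1)) :=
    fun t ht => (hderiv t ht).differentiableAt.differentiableWithinAt
  refine AntitoneOn.concaveOn_of_deriv (convex_Ioi _) hdiff.continuousOn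
    (by rwa [interior_Ioi]) ?_
  rw [interior_Ioi]
  intro s hs t ht hst
  rw [(hderiv s hs).deriv, (hderiv t ht).deriv]
  obtain ⟨hs1, hs2⟩ := hpos s hs
  exact div_le_div_of_nonneg_left (by linarith) (by positivity)
    (mul_le_mul (by linarith) (by nlinarith) hs2.le (by linarith))

theorem concaveOn_logb_one_add_div_one_add_mul {b h : ℝ} (hb : 1 < b) (h0 : 0 ≤ h) (h1 : h ≤ 1) :
    ConcaveOn ℝ (Set.Ioi (-1)) (fun t => logb b ((1 + t) / (1 + h * t))) := by
  refine ((concaveOn_log_one_add_sub_log_one_add_mul h0 h1).smul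
    (inv_nonneg.2 (log_pos hb).le)).congr fun t (ht : -1 < t) => ?_
  rw [logb, log_div (by linarith) (one_add_mul_pos_of_one_add_pos h0 h1 (by linarith)).ne',
    ← inv_mul_eq_div]
  rfl

theorem one_add_div_div_one_add_mul_div {K : Type*} [Field K] {a : K} (ha : a ≠ 0) (p h : K) :
    (1 + p / a) / (1 + h * (p / a)) = (a + p) / (a + h * p) := by
  rw [← mul_div_mul_left _ _ ha]
  congr 1 <;> field_simp

theorem sum_mul_logb_add_div_add_mul_le {ι : Type*} (s : Finset ι) {b h : ℝ} (hb : 1 < b)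
    (h0 : 0 ≤ h) (h1 : h ≤ 1) {α P : ι → ℝ} (hα : ∀ k ∈ s, 0 < α k) (hα1 : ∑ k ∈ s, α k = 1)
    (hP : ∀ k ∈ s, 0 ≤ P k) :
    ∑ k ∈ s, α k * logb b ((α k + P k) / (α k + h * P k))
      ≤ logb b ((1 + ∑ k ∈ s, P k) / (1 + h * ∑ k ∈ s, P k)) := by
  have hjensen := (concaveOn_logb_one_add_div_one_add_mul hb h0 h1).le_map_sum
    (fun k hk => (hα k hk).le) hα1 (p := fun k => P k / α k)
    (fun k hk => show -1 < P k / α k by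
      have := div_nonneg (hP k hk) (hα k hk).le; linarith)
  have hmean : ∑ k ∈ s, α k • (P k / α k) = ∑ k ∈ s, P k :=
    sum_congr rfl fun k hk => mul_div_cancel₀ _ (hα k hk).ne'
  rw [hmean] at hjensen
  refine le_of_eq_of_le (sum_congr rfl fun k hk => ?_) hjensen
  rw [smul_eq_mul, one_add_div_div_one_add_mul_div (hα k hk).ne']

theorem sum_div_mul_logb_div_add_div_add_mul {ι : Type*} (s : Finset ι) (b h : ℝ) {P : ι → ℝ}
    (hP : ∀ k ∈ s, P k ≠ 0) (hS : ∑ j ∈ s, P j ≠ 0) :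
    ∑ k ∈ s, (P k / ∑ j ∈ s, P j) *
        logb b ((P k / ∑ j ∈ s, P j + P k) / (P k / ∑ j ∈ s, P j + h * P k))
      = logb b ((1 + ∑ j ∈ s, P j) / (1 + h * ∑ j ∈ s, P j)) := by
  set S := ∑ j ∈ s, P j
  have hratio : ∀ k ∈ s, (P k / S + P k) / (P k / S + h * P k) = (1 + S) / (1 + h * S) :=
    fun k hk => by
      rw [← one_add_div_div_one_add_mul_div (div_ne_zero (hP k hk) hS), div_div_cancel₀ (hP k hk)]
  rw [sum_congr rfl fun k hk => by rw [hratio k hk], ← sum_mul, ← sum_div, div_self hS, one_mul]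

theorem sum_div_two_mul {ι : Type*} (s : Finset ι) (α x : ι → ℝ) :
    ∑ k ∈ s, (α k / 2) * x k = 1 / 2 * ∑ k ∈ s, α k * x k := by
  rw [mul_sum]
  exact sum_congr rfl fun k _ => by ring

/-- For probability vectors `α` with positive entries and `0 < h < 1`,
`f(α) = Σ_k (α_k/2)·log₂((α_k + P_k)/(α_k + h·P_k)) ≤ (1/2)·log₂((1+Σ_k P_k)/(1+h·Σ_k P_k))`,
with equality when `α_k = P_k/Σ_j P_j`. -/
theorem tdma_secrecy_jensen_bound
    (K : ℕ) (hK : 0 < K) (P : Fin K → ℝ) (hP : ∀ k, 0 < P k)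
    (h : ℝ) (hh0 : 0 < h) (hh1 : h < 1) :
    (∀ α : Fin K → ℝ, (∀ k, 0 < α k) → (∑ k, α k) = 1 →
      ∑ k, (α k / 2) * logb 2 ((α k + P k) / (α k + h * P k))
        ≤ (1 / 2) * logb 2 ((1 + ∑ k, P k) / (1 + h * ∑ k, P k))) ∧
    (∑ k, ((P k / ∑ j, P j) / 2) *
        logb 2 (((P k / ∑ j, P j) + P k) / ((P k / ∑ j, P j) + h * P k))
      = (1 / 2) * logb 2 ((1 + ∑ k, P k) / (1 + h * ∑ k, P k))) := by
  have hS : 0 < ∑ k, P k :=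
    sum_pos (fun k _ => hP k) (univ_nonempty_iff.2 (Fin.pos_iff_nonempty.1 hK))
  refine ⟨fun α hα hα1 => ?_, ?_⟩
  · rw [sum_div_two_mul]
    exact mul_le_mul_of_nonneg_left (sum_mul_logb_add_div_add_mul_le _ one_lt_two hh0.le hh1.le
      (fun k _ => hα k) hα1 (fun k _ => (hP k).le)) one_half_pos.le
  · rw [sum_div_two_mul, sum_div_mul_logb_div_add_div_add_mul _ _ _ (fun k _ => (hP k).ne') hS.ne']
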